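/- K-infusion is an involution: for increasing tableaux T of shape λ/α and U of shape ν/λ, applying K-infusion to the pair (K-infusion₁(T,U), K-infusion₂(T,U)) returns the original pair (T,U). -/

import Mathlib

open Finset
open scoped Classical

/-- A box of a Young diagram: (row, column), rows increasing downward. -/
abbrev Box : Type := ℕ × ℕ

/-- A Young diagram: a finite lower set in both coordinates. -/
def IsYoung (μ : Finset Box) : Prop :=
  (∀ r c : ℕ, (r + 1, c) ∈ μ → (r, c) ∈ μ) ∧
  (∀ r c : ℕ, (r, c + 1) ∈ μ → (r, c) ∈ μ)

/-- Two boxes are adjacent (share an edge). -/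
def adjB (a b : Box) : Prop :=
  (a.1 = b.1 ∧ (a.2 + 1 = b.2 ∨ b.2 + 1 = a.2)) ∨
  (a.2 = b.2 ∧ (a.1 + 1 = b.1 ∨ b.1 + 1 = a.1))

/-- Connectivity within a finite set of boxes. -/
def conn (S : Finset Box) (a b : Box) : Prop :=
  Relation.ReflTransGen (fun x y => x ∈ S ∧ y ∈ S ∧ adjB x y) a b

/-- Entries strictly increase along rows and columns. -/
def IncreasingOn (dom : Finset Box) (f : Box → ℕ) : Prop :=
  (∀ r c : ℕ, (r, c) ∈ dom → (r, c + 1) ∈ dom → f (r, c) < f (r, c + 1)) ∧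
  (∀ r c : ℕ, (r, c) ∈ dom → (r + 1, c) ∈ dom → f (r, c) < f (r + 1, c))

def maxEntry (dom : Finset Box) (f : Box → ℕ) : ℕ := dom.sup f

/-- An increasing tableau: positive entries, strictly increasing along rows and
columns, and every value `1,…,max` appears at least once. -/
def IsIncTab (dom : Finset Box) (f : Box → ℕ) : Prop :=
  IncreasingOn dom f ∧ (∀ b ∈ dom, 1 ≤ f b) ∧
  (∀ v : ℕ, 1 ≤ v → v ≤ maxEntry dom f → ∃ b ∈ dom, f b = v)

/-- A standard Young tableau: an increasing tableau with distinct entries. -/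
def IsSYT (dom : Finset Box) (f : Box → ℕ) : Prop :=
  IsIncTab dom f ∧ ∀ a ∈ dom, ∀ b ∈ dom, f a = f b → a = b

/-- An inner corner of `λ`: a maximally southeast box of `λ`. -/
def InnerCorner (lam : Finset Box) (x : Box) : Prop :=
  x ∈ lam ∧ (x.1 + 1, x.2) ∉ lam ∧ (x.1, x.2 + 1) ∉ lam

/-- An outer corner of `ν`: a maximally northwest box outside `ν`. -/
def OuterCorner (nu : Finset Box) (x : Box) : Prop :=
  x ∉ nu ∧ (x.1 = 0 ∨ (x.1 - 1, x.2) ∈ nu) ∧ (x.2 = 0 ∨ (x.1, x.2 - 1) ∈ nu)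

/-- No two boxes of `A` share a row or a column. -/
def NoTwoSameRowCol (A : Finset Box) : Prop :=
  ∀ a ∈ A, ∀ b ∈ A, a ≠ b → a.1 ≠ b.1 ∧ a.2 ≠ b.2

/-- One `switch` stage of a K-jdt slide: in the union of ribbons formed by the
•-boxes (`st.1`) and the boxes of the numerical region `st.2.1` with entry `i`,
swap the two symbols on every connected component with at least two boxes
(single-box components are unchanged).  The state is (dots, numerical domain,
numerical entries). -/
noncomputable def switchStep (st : Finset Box × Finset Box × (Box → ℕ)) (i : ℕ) :
    Finset Box × Finset Box × (Box → ℕ) :=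
  let dots := st.1
  let dom := st.2.1
  let f := st.2.2
  let S : Finset Box := dots ∪ dom.filter (fun b => f b = i)
  let sw : Box → Prop := fun b => ∃ b' ∈ S, b' ≠ b ∧ conn S b b'
  ( dom.filter (fun b => f b = i ∧ sw b) ∪ dots.filter (fun b => ¬ sw b),
    dom.filter (fun b => ¬ (f b = i ∧ sw b)) ∪ dots.filter sw,
    fun b => if b ∈ dots ∧ sw b then i else f b )

/-- The state of a K-jdt slide started with •'s at `xs`, after processing the
values `1, 2, …, m`. -/
noncomputable def KState (xs dom : Finset Box) (f : Box → ℕ) (m : ℕ) :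
    Finset Box × Finset Box × (Box → ℕ) :=
  (List.range m).foldl (fun st i => switchStep st (i + 1)) (xs, dom, f)

/-- The K-theoretic jeu de taquin slide of the tableau `(dom, f)` into the set
`xs` of inner corners: process the values `1,…,max` and discard the final •'s. -/
noncomputable def KJdt (xs dom : Finset Box) (f : Box → ℕ) : Finset Box × (Box → ℕ) :=
  ((KState xs dom f (maxEntry dom f)).2.1, (KState xs dom f (maxEntry dom f)).2.2)

/-- The state of a reverse K-jdt slide: •'s start at `xs` (outer corners) and the
values `m, m-1, …, 1` are processed in decreasing order. -/
noncomputable def KRevState (xs dom : Finset Box) (f : Box → ℕ) (m : ℕ) :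
    Finset Box × Finset Box × (Box → ℕ) :=
  (List.range m).foldr (fun i st => switchStep st (i + 1)) (xs, dom, f)

/-- A slide applied to the state (inner shape `λ`, tableau domain, entries). -/
noncomputable def doSlide (st : Finset Box × Finset Box × (Box → ℕ)) (xs : Finset Box) :
    Finset Box × Finset Box × (Box → ℕ) :=
  (st.1 \ xs, (KJdt xs st.2.1 st.2.2).1, (KJdt xs st.2.1 st.2.2).2)

/-- A reverse slide applied to the state (inner shape `λ`, tableau domain, entries). -/
noncomputable def doRevSlide (st : Finset Box × Finset Box × (Box → ℕ)) (xs : Finset Box) :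
    Finset Box × Finset Box × (Box → ℕ) :=
  (st.1 \ (KRevState xs st.2.1 st.2.2 (maxEntry st.2.1 st.2.2)).1,
   (KRevState xs st.2.1 st.2.2 (maxEntry st.2.1 st.2.2)).2.1,
   (KRevState xs st.2.1 st.2.2 (maxEntry st.2.1 st.2.2)).2.2)

/-- One step of a rectification: a K-jdt slide into a nonempty set of inner corners. -/
def RectStep (p q : Finset Box × Finset Box × (Box → ℕ)) : Prop :=
  ∃ xs : Finset Box, xs.Nonempty ∧ (∀ x ∈ xs, InnerCorner p.1 x) ∧ q = doSlide p xs

/-- The tableau `(dom, f)` of shape `ν/λ` admits a rectification order ending at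
the straight-shape tableau `(dom', f')`. -/
def RectTo (lam dom : Finset Box) (f : Box → ℕ) (dom' : Finset Box) (f' : Box → ℕ) : Prop :=
  ∃ g : Box → ℕ, Relation.ReflTransGen RectStep (lam, dom, f) (∅, dom', g) ∧
    ∀ b ∈ dom', g b = f' b

def rowLen (μ : Finset Box) (r : ℕ) : ℕ := (μ.filter (fun b => b.1 = r)).card

/-- The superstandard tableau of straight shape `μ`: rows filled consecutively. -/
def sstd (μ : Finset Box) : Box → ℕ :=
  fun b => (∑ i ∈ Finset.range b.1, rowLen μ i) + b.2 + 1

/-- `a` occurs before `b` in the reading word (rows left to right, bottom to top). -/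
def ReadBefore (a b : Box) : Prop := b.1 < a.1 ∨ (a.1 = b.1 ∧ a.2 < b.2)

/-- Length of the longest strictly increasing subsequence of the reading word. -/
noncomputable def LIS (dom : Finset Box) (f : Box → ℕ) : ℕ :=
  (dom.powerset.filter
    (fun I => ∀ a ∈ I, ∀ b ∈ I, ReadBefore a b → f a < f b)).sup Finset.card

/-- One step of K-infusion: slide the boxes carrying the largest label `m` of the
inner tableau through the outer tableau, recording `m` at the vacated holes. -/
noncomputable def infusionStep
    (st : (Finset Box × (Box → ℕ)) × (Finset Box × (Box → ℕ)) × (Finset Box × (Box → ℕ))) :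
    (Finset Box × (Box → ℕ)) × (Finset Box × (Box → ℕ)) × (Finset Box × (Box → ℕ)) :=
  let m := maxEntry st.1.1 st.1.2
  let xs := st.1.1.filter (fun b => st.1.2 b = m)
  let ks := KState xs st.2.1.1 st.2.1.2 (maxEntry st.2.1.1 st.2.1.2)
  ( (st.1.1 \ xs, st.1.2),
    (ks.2.1, ks.2.2),
    (st.2.2.1 ∪ ks.1, fun b => if b ∈ ks.1 then m else st.2.2.2 b) )

/-- K-infusion of the pair `(T, U)`, where `U`'s shape extends `T`'s shape:
returns `(K-infusion₁(T,U), K-infusion₂(T,U))`. -/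
noncomputable def KInfusion (Tdom : Finset Box) (Tf : Box → ℕ)
    (Udom : Finset Box) (Uf : Box → ℕ) :
    (Finset Box × (Box → ℕ)) × (Finset Box × (Box → ℕ)) :=
  ((infusionStep^[maxEntry Tdom Tf] ((Tdom, Tf), (Udom, Uf), (∅, fun _ => 0))).2.1,
   (infusionStep^[maxEntry Tdom Tf] ((Tdom, Tf), (Udom, Uf), (∅, fun _ => 0))).2.2)

/-- `Δ(T)`: erase the entry `1` at the northwest corner, subtract one from the
remaining entries, and slide into the vacated corner. -/
noncomputable def Delta (p : Finset Box × (Box → ℕ)) : Finset Box × (Box → ℕ) :=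
  KJdt {((0 : ℕ), (0 : ℕ))} (p.1.erase (0, 0)) (fun b => p.2 b - 1)

/-- K-evacuation: box `b` receives label `i` when `b` belongs to the shape of
`Δ^{i-1}(T)` but not to the shape of `Δ^{i}(T)`. -/
noncomputable def Kevac (p : Finset Box × (Box → ℕ)) : Box → ℕ :=
  fun b => sInf {i : ℕ | b ∉ (Delta^[i] p).1}

/-- A horizontal strip: no two boxes in the same column. -/
def HorizontalStrip (dom : Finset Box) : Prop :=
  ∀ a ∈ dom, ∀ b ∈ dom, a ≠ b → a.2 ≠ b.2

def LeftmostIn (dom : Finset Box) (r c : ℕ) : Prop :=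
  (r, c) ∈ dom ∧ ∀ c' < c, (r, c') ∉ dom

def RightmostIn (dom : Finset Box) (r c : ℕ) : Prop :=
  (r, c) ∈ dom ∧ ∀ c' > c, (r, c') ∉ dom

/-- A `t`-Pieri filling of a horizontal strip: entries of each row consecutive,
the bottom row starts with `1`, each other row starts with the last entry of the
next nonempty row below it, or with that entry plus one; entries are `1,…,t`. -/
def IsPieri (dom : Finset Box) (f : Box → ℕ) (t : ℕ) : Prop :=
  HorizontalStrip dom ∧
  (∀ r c : ℕ, (r, c) ∈ dom → (r, c + 1) ∈ dom → f (r, c + 1) = f (r, c) + 1) ∧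
  (∀ r c : ℕ, LeftmostIn dom r c → (∀ b ∈ dom, b.1 ≤ r) → f (r, c) = 1) ∧
  (∀ r c r' c' : ℕ, LeftmostIn dom r c → RightmostIn dom r' c' → r < r' →
    (∀ b ∈ dom, ¬ (r < b.1 ∧ b.1 < r')) →
    (f (r, c) = f (r', c') ∨ f (r, c) = f (r', c') + 1)) ∧
  (∀ b ∈ dom, 1 ≤ f b ∧ f b ≤ t) ∧ (dom.Nonempty → ∃ b ∈ dom, f b = t)

/-- The domain of the one-row shape `(t)`. -/
def rowDom (t : ℕ) : Finset Box := (Finset.range t).image (fun c => ((0 : ℕ), c))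

/-- The entries of the superstandard one-row tableau `S_(t)`. -/
def rowEnt : Box → ℕ := fun b => b.2 + 1

def numRows (dom : Finset Box) : ℕ := (dom.image Prod.fst).card

/-- The number of increasing tableaux of shape `ν/λ` whose K-rectification (for
some, equivalently by Theorem 1 any, rectification order) is the superstandard
tableau `S_μ`.  Tableaux are normalized to vanish off their domain. -/
noncomputable def KrectCount (lam nu mu : Finset Box) : ℕ :=
  Set.ncard {f : Box → ℕ | (∀ b, b ∉ nu \ lam → f b = 0) ∧ IsIncTab (nu \ lam) f ∧
    ∃ g, Relation.ReflTransGen RectStep (lam, nu \ lam, f) (∅, mu, g) ∧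
      ∀ b ∈ mu, g b = sstd mu b}

/-- Apply a (forward or reverse) K-jdt slide, as specified by `mv`. -/
noncomputable def applyMove (st : Finset Box × Finset Box × (Box → ℕ))
    (mv : Bool × Finset Box) : Finset Box × Finset Box × (Box → ℕ) :=
  if mv.1 then doSlide st mv.2 else doRevSlide st mv.2

def ValidMove (st : Finset Box × Finset Box × (Box → ℕ)) (mv : Bool × Finset Box) : Prop :=
  mv.2.Nonempty ∧ (mv.1 = true → ∀ x ∈ mv.2, InnerCorner st.1 x) ∧
    (mv.1 = false → ∀ x ∈ mv.2, OuterCorner (st.1 ∪ st.2.1) x)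

noncomputable def applySeq (L : List (Bool × Finset Box))
    (st : Finset Box × Finset Box × (Box → ℕ)) : Finset Box × Finset Box × (Box → ℕ) :=
  L.foldl applyMove st

def ValidSeq : List (Bool × Finset Box) → (Finset Box × Finset Box × (Box → ℕ)) → Prop
  | [], _ => True
  | mv :: L, st => ValidMove st mv ∧ ValidSeq L (applyMove st mv)

/-- K-dual equivalence: every common sequence of (forward or reverse) slides
produces tableaux of the same shape. -/
def KDualEquiv (lam dom : Finset Box) (f g : Box → ℕ) : Prop :=
  ∀ L : List (Bool × Finset Box),
    ValidSeq L (lam, dom, f) → ValidSeq L (lam, dom, g) →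
    (applySeq L (lam, dom, f)).2.1 = (applySeq L (lam, dom, g)).2.1

/-!
Encode a pair of tableaux as one labelled configuration: the inner tableau on side `true`, the
outer one on side `false`. A switch stage of K-jdt, where the •'s carrying the inner label `t`
meet the outer entry `i`, is then the switch of the labels `(true, t)` and `(false, i)` on every
connected component of at least two boxes of their union. The first K-infusion performs these
switches row by row (`t = M, …, 1`, each with `i = 1, …, K`); the second, with the roles of the
sides exchanged, column by column (`i = K, …, 1`, each with `t = 1, …, M`). Switches are
involutions and switches sharing no label commute, so the second word undoes the first.

Since the tableaux are increasing, no two adjacent boxes carry the same label. Switches preserve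
this property, and on such configurations they neither create nor destroy labels; so the maximal
entries, which fix the numbers of slides and of switch stages, never change.
-/

abbrev Label : Type := Bool × ℕ

abbrev Config : Type := Box → Option Label

lemma adjB_symm {a b : Box} (h : adjB a b) : adjB b a := by
  unfold adjB at *; omega

lemma adjB_irrefl (a : Box) : ¬ adjB a a := by
  unfold adjB; omega

section Switch

variable {l₁ l₂ l₃ l₄ l : Label} {c : Config} {a b : Box}

def activeSet (l₁ l₂ : Label) (c : Config) : Set Box := {b | c b = some l₁ ∨ c b = some l₂}

def IsSwitched (l₁ l₂ : Label) (c : Config) (b : Box) : Prop :=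
  ∃ b' ∈ activeSet l₁ l₂ c, b' ≠ b ∧
    Relation.ReflTransGen
      (fun x y => x ∈ activeSet l₁ l₂ c ∧ y ∈ activeSet l₁ l₂ c ∧ adjB x y) b b'

noncomputable def switch (l₁ l₂ : Label) (c : Config) : Config := fun b =>
  if IsSwitched l₁ l₂ c b then (if c b = some l₁ then some l₂ else some l₁) else c b

lemma IsSwitched.mem (h : IsSwitched l₁ l₂ c b) : b ∈ activeSet l₁ l₂ c := by
  obtain ⟨b', -, hne, hconn⟩ := h
  rcases Relation.ReflTransGen.cases_head hconn with rfl | ⟨x, ⟨hb, -⟩, -⟩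
  · exact absurd rfl hne
  · exact hb

lemma isSwitched_of_adjB (ha : a ∈ activeSet l₁ l₂ c) (hb : b ∈ activeSet l₁ l₂ c)
    (hab : adjB a b) : IsSwitched l₁ l₂ c a :=
  ⟨b, hb, fun h => adjB_irrefl a (h ▸ hab), .single ⟨ha, hb, hab⟩⟩

lemma IsSwitched.exists_adjB (h : IsSwitched l₁ l₂ c b) :
    ∃ x ∈ activeSet l₁ l₂ c, adjB b x ∧ IsSwitched l₁ l₂ c x := by
  obtain ⟨b', hb', hne, hconn⟩ := h
  rcases Relation.ReflTransGen.cases_head hconn with rfl | ⟨x, ⟨hb, hx, hbx⟩, -⟩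
  · exact absurd rfl hne
  · exact ⟨x, hx, hbx, isSwitched_of_adjB hx hb (adjB_symm hbx)⟩

lemma switch_apply_of_isSwitched (h : IsSwitched l₁ l₂ c b) :
    switch l₁ l₂ c b = if c b = some l₁ then some l₂ else some l₁ := if_pos h

lemma switch_apply_of_not_isSwitched (h : ¬ IsSwitched l₁ l₂ c b) : switch l₁ l₂ c b = c b :=
  if_neg h

lemma switch_apply_of_notMem (h : b ∉ activeSet l₁ l₂ c) : switch l₁ l₂ c b = c b :=
  switch_apply_of_not_isSwitched fun hs => h hs.mem

lemma switch_apply_mem_of_isSwitched (h : IsSwitched l₁ l₂ c b) :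
    switch l₁ l₂ c b = some l₁ ∨ switch l₁ l₂ c b = some l₂ := by
  rw [switch_apply_of_isSwitched h]; split_ifs <;> simp

lemma switch_apply_eq_some_iff (h₁ : l ≠ l₁) (h₂ : l ≠ l₂) :
    switch l₁ l₂ c b = some l ↔ c b = some l := by
  by_cases hs : IsSwitched l₁ l₂ c b
  · have hmem : c b = some l₁ ∨ c b = some l₂ := hs.mem
    rcases switch_apply_mem_of_isSwitched hs with h | h <;> rw [h] <;>
      rcases hmem with h' | h' <;> rw [h'] <;> simp [h₁.symm, h₂.symm]
  · rw [switch_apply_of_not_isSwitched hs]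

lemma activeSet_switch : activeSet l₁ l₂ (switch l₁ l₂ c) = activeSet l₁ l₂ c := by
  ext b
  by_cases hs : IsSwitched l₁ l₂ c b
  · exact iff_of_true (switch_apply_mem_of_isSwitched hs) hs.mem
  · simp only [activeSet, Set.mem_ofPred_eq, switch_apply_of_not_isSwitched hs]

lemma activeSet_switch_of_ne (h₁₃ : l₁ ≠ l₃) (h₁₄ : l₁ ≠ l₄) (h₂₃ : l₂ ≠ l₃) (h₂₄ : l₂ ≠ l₄) :
    activeSet l₁ l₂ (switch l₃ l₄ c) = activeSet l₁ l₂ c := by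
  ext b
  simp only [activeSet, Set.mem_ofPred_eq, switch_apply_eq_some_iff h₁₃ h₁₄,
    switch_apply_eq_some_iff h₂₃ h₂₄]

lemma isSwitched_congr {c' : Config} (h : activeSet l₃ l₄ c' = activeSet l₁ l₂ c) :
    IsSwitched l₃ l₄ c' = IsSwitched l₁ l₂ c := by
  unfold IsSwitched; rw [h]

theorem switch_switch : switch l₁ l₂ (switch l₁ l₂ c) = c := by
  funext b
  by_cases hs : IsSwitched l₁ l₂ c b
  · have hs' : IsSwitched l₁ l₂ (switch l₁ l₂ c) b := by
      rwa [isSwitched_congr activeSet_switch]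
    have hmem : c b = some l₁ ∨ c b = some l₂ := hs.mem
    rw [switch_apply_of_isSwitched hs', switch_apply_of_isSwitched hs]
    rcases hmem with h | h <;> rw [h] <;> split_ifs <;> simp_all
  · have hs' : ¬ IsSwitched l₁ l₂ (switch l₁ l₂ c) b := by
      rwa [isSwitched_congr activeSet_switch]
    rw [switch_apply_of_not_isSwitched hs', switch_apply_of_not_isSwitched hs]

lemma activeSet_comm : activeSet l₂ l₁ c = activeSet l₁ l₂ c := by
  ext b; exact or_comm

theorem switch_comm (h₁₃ : l₁ ≠ l₃) (h₁₄ : l₁ ≠ l₄) (h₂₃ : l₂ ≠ l₃) (h₂₄ : l₂ ≠ l₄) :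
    switch l₁ l₂ (switch l₃ l₄ c) = switch l₃ l₄ (switch l₁ l₂ c) := by
  funext b
  have hA := activeSet_switch_of_ne (c := c) h₁₃ h₁₄ h₂₃ h₂₄
  have hB := activeSet_switch_of_ne (c := c) h₁₃.symm h₂₃.symm h₁₄.symm h₂₄.symm
  have h₁₂ : IsSwitched l₁ l₂ (switch l₃ l₄ c) b ↔ IsSwitched l₁ l₂ c b := by
    rw [isSwitched_congr hA]
  have h₃₄ : IsSwitched l₃ l₄ (switch l₁ l₂ c) b ↔ IsSwitched l₃ l₄ c b := by
    rw [isSwitched_congr hB]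
  by_cases hs : IsSwitched l₁ l₂ c b
  · have hb : b ∉ activeSet l₃ l₄ c := by
      rcases hs.mem with h | h <;> rintro (h' | h') <;> simp_all
    have hb' : b ∉ activeSet l₃ l₄ (switch l₁ l₂ c) := hB ▸ hb
    rw [switch_apply_of_notMem hb', switch_apply_of_isSwitched (h₁₂.2 hs),
      switch_apply_of_notMem hb, switch_apply_of_isSwitched hs]
  · rw [switch_apply_of_not_isSwitched (mt h₁₂.1 hs)]
    by_cases hs' : IsSwitched l₃ l₄ c b
    · rw [switch_apply_of_isSwitched (h₃₄.2 hs'), switch_apply_of_isSwitched hs',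
        switch_apply_of_not_isSwitched hs]
    · rw [switch_apply_of_not_isSwitched (mt h₃₄.1 hs'), switch_apply_of_not_isSwitched hs',
        switch_apply_of_not_isSwitched hs]

theorem switch_symm : switch l₁ l₂ c = switch l₂ l₁ c := by
  funext b
  have h : IsSwitched l₂ l₁ c b ↔ IsSwitched l₁ l₂ c b := by
    rw [isSwitched_congr activeSet_comm]
  by_cases hs : IsSwitched l₁ l₂ c b
  · have hmem : c b = some l₁ ∨ c b = some l₂ := hs.mem
    rw [switch_apply_of_isSwitched hs, switch_apply_of_isSwitched (h.2 hs)]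
    rcases hmem with h | h <;> rw [h] <;> split_ifs <;> simp_all
  · rw [switch_apply_of_not_isSwitched hs, switch_apply_of_not_isSwitched (mt h.1 hs)]

end Switch

section SwitchWord

noncomputable def switchWord (L : List (Label × Label)) (c : Config) : Config :=
  L.foldl (fun c p => switch p.1 p.2 c) c

variable {L : List (Label × Label)} {c : Config} {l₁ l₂ l : Label}

@[simp] lemma switchWord_nil (c : Config) : switchWord [] c = c := rfl

@[simp] lemma switchWord_cons (l₁ l₂ : Label) (L : List (Label × Label)) (c : Config) :
    switchWord ((l₁, l₂) :: L) c = switchWord L (switch l₁ l₂ c) := rfl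

lemma switchWord_append (L₁ L₂ : List (Label × Label)) (c : Config) :
    switchWord (L₁ ++ L₂) c = switchWord L₂ (switchWord L₁ c) := List.foldl_append

lemma switchWord_switch_comm
    (h : ∀ p ∈ L, p.1 ≠ l₁ ∧ p.1 ≠ l₂ ∧ p.2 ≠ l₁ ∧ p.2 ≠ l₂) :
    switchWord L (switch l₁ l₂ c) = switch l₁ l₂ (switchWord L c) := by
  induction L generalizing c with
  | nil => rfl
  | cons p L ih =>
    obtain ⟨l₃, l₄⟩ := p
    obtain ⟨h₁, h₂, h₃, h₄⟩ := h _ List.mem_cons_self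
    rw [switchWord_cons, switchWord_cons, switch_comm h₁ h₂ h₃ h₄]
    exact ih fun q hq => h q (List.mem_cons_of_mem _ hq)

lemma switchWord_reverse_switchWord (L : List (Label × Label)) (c : Config) :
    switchWord L.reverse (switchWord L c) = c := by
  induction L generalizing c with
  | nil => rfl
  | cons p L ih =>
    obtain ⟨l₁, l₂⟩ := p
    rw [List.reverse_cons, switchWord_append, switchWord_cons l₁ l₂ L c, ih, switchWord_cons,
      switchWord_nil, switch_switch]

lemma switchWord_apply_eq_some_iff (h : ∀ p ∈ L, l ≠ p.1 ∧ l ≠ p.2) (b : Box) :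
    switchWord L c b = some l ↔ c b = some l := by
  induction L generalizing c with
  | nil => rfl
  | cons p L ih =>
    obtain ⟨l₁, l₂⟩ := p
    obtain ⟨h₁, h₂⟩ := h _ List.mem_cons_self
    rw [switchWord_cons, ih fun q hq => h q (List.mem_cons_of_mem _ hq),
      switch_apply_eq_some_iff h₁ h₂]

end SwitchWord

section PassWord

/-- The K-jdt slide of the boxes labelled `(s, t)` through the labels `1, …, m` of side `!s`. -/
def slideWord (s : Bool) (t m : ℕ) : List (Label × Label) :=
  (List.range m).map fun i => ((s, t), (!s, i + 1))

/-- The switches performed by K-infusion when the inner labels `1, …, M` on side `s` slide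
through the outer labels `1, …, K`, largest inner label first. -/
def passWord (s : Bool) : ℕ → ℕ → List (Label × Label)
  | 0, _ => []
  | M + 1, K => slideWord s (M + 1) K ++ passWord s M K

lemma slideWord_succ (s : Bool) (t m : ℕ) :
    slideWord s t (m + 1) = slideWord s t m ++ [((s, t), (!s, m + 1))] := by
  simp [slideWord, List.range_succ]

lemma mem_slideWord {s : Bool} {t m : ℕ} {p : Label × Label} :
    p ∈ slideWord s t m ↔ ∃ i, 1 ≤ i ∧ i ≤ m ∧ p = ((s, t), (!s, i)) := by
  simp only [slideWord, List.mem_map, List.mem_range]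
  constructor
  · rintro ⟨i, hi, rfl⟩; exact ⟨i + 1, by omega, hi, rfl⟩
  · rintro ⟨i, hi, him, rfl⟩; exact ⟨i - 1, by omega, by rw [Nat.sub_add_cancel hi]⟩

lemma switchWord_slideWord_apply_eq_some_iff {s : Bool} {t m v : ℕ} (hv : v ≠ t) (c : Config)
    (b : Box) : switchWord (slideWord s t m) c b = some (s, v) ↔ c b = some (s, v) := by
  refine switchWord_apply_eq_some_iff (fun p hp => ?_) b
  obtain ⟨i, -, -, rfl⟩ := mem_slideWord.mp hp
  simp [hv]

lemma mem_passWord {s : Bool} {M K : ℕ} {p : Label × Label} (hp : p ∈ passWord s M K) :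
    ∃ t i, t ≤ M ∧ i ≤ K ∧ p = ((s, t), (!s, i)) := by
  induction M with
  | zero => cases hp
  | succ M ih =>
    rcases List.mem_append.mp hp with hp | hp
    · obtain ⟨i, -, hi, rfl⟩ := mem_slideWord.mp hp
      exact ⟨M + 1, i, le_rfl, hi, rfl⟩
    · obtain ⟨t, i, ht, hi, rfl⟩ := ih hp
      exact ⟨t, i, by omega, hi, rfl⟩

lemma switchWord_passWord_succ (K N : ℕ) (c : Config) :
    switchWord (passWord false K (N + 1)) c =
      switchWord (slideWord true (N + 1) K).reverse (switchWord (passWord false K N) c) := by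
  induction K generalizing c with
  | zero => rfl
  | succ K ih =>
    have hrow : (slideWord true (N + 1) (K + 1)).reverse
        = ((true, N + 1), (false, K + 1)) :: (slideWord true (N + 1) K).reverse := by
      simp [slideWord_succ]
    have hdisj : ∀ p ∈ passWord false K N, p.1 ≠ (false, K + 1) ∧ p.1 ≠ (true, N + 1) ∧
        p.2 ≠ (false, K + 1) ∧ p.2 ≠ (true, N + 1) := by
      intro p hp
      obtain ⟨t, i, ht, hi, rfl⟩ := mem_passWord hp
      refine ⟨?_, ?_, ?_, ?_⟩ <;> simp <;> omega
    rw [passWord, passWord, slideWord_succ, List.append_assoc, switchWord_append,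
      switchWord_append, switchWord_cons, switchWord_nil, ih,
      Bool.not_false, switchWord_switch_comm hdisj, switchWord_append, hrow, switchWord_cons,
      switch_symm]

theorem switchWord_passWord_passWord (N K : ℕ) (c : Config) :
    switchWord (passWord false K N) (switchWord (passWord true N K) c) = c := by
  induction N generalizing c with
  | zero =>
    induction K with
    | zero => rfl
    | succ K ih => exact ih
  | succ N ih =>
    rw [passWord, switchWord_append, switchWord_passWord_succ, ih,
      switchWord_reverse_switchWord]

end PassWord

section Proper

def IsProper (c : Config) : Prop := ∀ a b l, adjB a b → c a = some l → c b ≠ some l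

variable {c : Config} {l₁ l₂ l : Label} {L : List (Label × Label)}

lemma isProper_switch (hc : IsProper c) : IsProper (switch l₁ l₂ c) := by
  have key : ∀ a b, adjB a b → IsSwitched l₁ l₂ c a → ¬ IsSwitched l₁ l₂ c b →
      switch l₁ l₂ c a ≠ switch l₁ l₂ c b := by
    intro a b hab ha hb h
    have hb' : b ∉ activeSet l₁ l₂ c := fun hb' =>
      hb (isSwitched_of_adjB hb' ha.mem (adjB_symm hab))
    rw [switch_apply_of_not_isSwitched hb] at h
    apply hb'
    show c b = some l₁ ∨ c b = some l₂
    rw [← h]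
    exact switch_apply_mem_of_isSwitched ha
  intro a b l hab ha hb
  by_cases hsa : IsSwitched l₁ l₂ c a <;> by_cases hsb : IsSwitched l₁ l₂ c b
  · have hma : c a = some l₁ ∨ c a = some l₂ := hsa.mem
    have hmb : c b = some l₁ ∨ c b = some l₂ := hsb.mem
    rw [switch_apply_of_isSwitched hsa] at ha
    rw [switch_apply_of_isSwitched hsb] at hb
    rcases hma with h | h <;> have := hc a b _ hab h <;> rcases hmb with h' | h' <;> simp_all
  · exact key a b hab hsa hsb (ha.trans hb.symm)
  · exact key b a (adjB_symm hab) hsb hsa (hb.trans ha.symm)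
  · rw [switch_apply_of_not_isSwitched hsa] at ha
    rw [switch_apply_of_not_isSwitched hsb] at hb
    exact hc a b l hab ha hb

lemma exists_of_switch_apply_eq (hc : IsProper c) {b : Box}
    (h : switch l₁ l₂ c b = some l) : ∃ a, c a = some l := by
  by_cases hs : IsSwitched l₁ l₂ c b
  · obtain ⟨x, hx, hbx, -⟩ := hs.exists_adjB
    have hmb : c b = some l₁ ∨ c b = some l₂ := hs.mem
    rw [switch_apply_of_isSwitched hs] at h
    refine ⟨x, ?_⟩
    rcases hmb with h' | h' <;> have := hc b x _ hbx h' <;> rcases hx with hx | hx <;> simp_all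
  · exact ⟨b, by rwa [switch_apply_of_not_isSwitched hs] at h⟩

lemma exists_switch_apply_eq_iff (hc : IsProper c) :
    (∃ b, switch l₁ l₂ c b = some l) ↔ ∃ b, c b = some l :=
  ⟨fun ⟨_, h⟩ => exists_of_switch_apply_eq hc h,
    fun ⟨_, h⟩ => exists_of_switch_apply_eq (isProper_switch hc) (by rwa [switch_switch])⟩

lemma isProper_switchWord (hc : IsProper c) : IsProper (switchWord L c) := by
  induction L generalizing c with
  | nil => exact hc
  | cons p L ih => exact ih (isProper_switch hc)

lemma exists_switchWord_apply_eq_iff (hc : IsProper c) :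
    (∃ b, switchWord L c b = some l) ↔ ∃ b, c b = some l := by
  induction L generalizing c with
  | nil => rfl
  | cons p L ih => exact (ih (isProper_switch hc)).trans (exists_switch_apply_eq_iff hc)

end Proper

section Part

def IsPart (c : Config) (s : Bool) (p : ℕ → Prop) (dom : Finset Box) (f : Box → ℕ) : Prop :=
  (∀ b ∈ dom, p (f b) ∧ c b = some (s, f b)) ∧ ∀ b v, p v → c b = some (s, v) → b ∈ dom

variable {c : Config} {s : Bool} {p q : ℕ → Prop} {dom dom' : Finset Box} {f f' : Box → ℕ}

lemma IsPart.apply (h : IsPart c s p dom f) {b : Box} (hb : b ∈ dom) : c b = some (s, f b) :=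
  (h.1 b hb).2

lemma IsPart.mem_iff (h : IsPart c s p dom f) {b : Box} :
    b ∈ dom ↔ ∃ v, p v ∧ c b = some (s, v) :=
  ⟨fun hb => ⟨f b, h.1 b hb⟩, fun ⟨v, hv, hb⟩ => h.2 b v hv hb⟩

lemma IsPart.exists_eq_iff (h : IsPart c s p dom f) {v : ℕ} :
    (∃ b ∈ dom, f b = v) ↔ p v ∧ ∃ b, c b = some (s, v) := by
  constructor
  · rintro ⟨b, hb, rfl⟩
    exact ⟨(h.1 b hb).1, b, h.apply hb⟩
  · rintro ⟨hv, b, hb⟩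
    have hbd := h.2 b v hv hb
    refine ⟨b, hbd, ?_⟩
    simpa [h.apply hbd] using hb

lemma IsPart.congr (h : IsPart c s p dom f) (hpq : ∀ b v, c b = some (s, v) → (p v ↔ q v)) :
    IsPart c s q dom f :=
  ⟨fun b hb => ⟨(hpq b _ (h.apply hb)).1 (h.1 b hb).1, h.apply hb⟩,
    fun b v hv hb => h.2 b v ((hpq b v hb).2 hv) hb⟩

lemma IsPart.unique (h : IsPart c s p dom f) (h' : IsPart c s p dom' f') :
    dom = dom' ∧ ∀ b ∈ dom, f b = f' b := by
  have hdom : dom = dom' := by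
    ext b; rw [h.mem_iff, h'.mem_iff]
  refine ⟨hdom, fun b hb => ?_⟩
  simpa using (h.apply hb).symm.trans (h'.apply (hdom ▸ hb))

lemma IsPart.of_agree {c' : Config} (h : IsPart c s p dom f)
    (hc : ∀ b v, p v → (c' b = some (s, v) ↔ c b = some (s, v))) : IsPart c' s p dom f :=
  ⟨fun b hb => ⟨(h.1 b hb).1, (hc b _ (h.1 b hb).1).2 (h.apply hb)⟩,
    fun b v hv hb => h.2 b v hv ((hc b v hv).1 hb)⟩

lemma IsPart.mem_filter_iff (h : IsPart c s p dom f) {m : ℕ} (hm : p m) {b : Box} :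
    b ∈ dom.filter (fun b => f b = m) ↔ c b = some (s, m) := by
  rw [mem_filter]
  refine ⟨fun ⟨hb, hf⟩ => hf ▸ h.apply hb, fun hb => ?_⟩
  have hb' := h.2 b m hm hb
  exact ⟨hb', by simpa [h.apply hb'] using hb⟩

lemma IsPart.sdiff_filter (h : IsPart c s p dom f) (m : ℕ) :
    IsPart c s (fun v => p v ∧ v ≠ m) (dom \ dom.filter (fun b => f b = m)) f := by
  refine ⟨fun b hb => ?_, fun b v hv hb => ?_⟩
  · obtain ⟨hb, hbm⟩ := mem_sdiff.mp hb
    exact ⟨⟨(h.1 b hb).1, fun he => hbm (mem_filter.mpr ⟨hb, he⟩)⟩, h.apply hb⟩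
  · refine mem_sdiff.mpr ⟨h.2 b v hv.1 hb, fun hbm => hv.2 ?_⟩
    obtain ⟨hb', hfm⟩ := mem_filter.mp hbm
    rw [h.apply hb', hfm] at hb
    simpa using hb.symm

lemma IsPart.union (h : IsPart c s p dom f) {D : Finset Box} {m : ℕ}
    (hD : ∀ b, b ∈ D ↔ c b = some (s, m)) :
    IsPart c s (fun v => p v ∨ v = m) (dom ∪ D) (fun b => if b ∈ D then m else f b) := by
  refine ⟨fun b hb => ?_, fun b v hv hb => ?_⟩
  · by_cases hbD : b ∈ D
    · simp only [if_pos hbD, or_true, true_and]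
      exact (hD b).1 hbD
    · have hb' : b ∈ dom := by simpa [hbD] using hb
      simp only [if_neg hbD]
      exact ⟨Or.inl (h.1 b hb').1, h.apply hb'⟩
  · rcases hv with hv | rfl
    · exact mem_union_left _ (h.2 b v hv hb)
    · exact mem_union_right _ ((hD b).2 hb)

end Part

section Slide

/-- `c` encodes the state `(•'s, tableau domain, entries)` of a K-jdt slide: the •'s carry
the label `(s, t)` and the tableau is the side `!s` of `c`. -/
def IsSlideState (s : Bool) (t : ℕ) (c : Config) (st : Finset Box × Finset Box × (Box → ℕ)) :
    Prop :=
  (∀ b, b ∈ st.1 ↔ c b = some (s, t)) ∧ IsPart c (!s) (fun _ => True) st.2.1 st.2.2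

/-- The predicate `sw` of `switchStep`. -/
def StepSwitched (st : Finset Box × Finset Box × (Box → ℕ)) (i : ℕ) (b : Box) : Prop :=
  ∃ b' ∈ st.1 ∪ st.2.1.filter (fun b => st.2.2 b = i), b' ≠ b ∧
    conn (st.1 ∪ st.2.1.filter (fun b => st.2.2 b = i)) b b'

variable {st : Finset Box × Finset Box × (Box → ℕ)} {i : ℕ} {b : Box}

lemma mem_switchStep_fst : b ∈ (switchStep st i).1 ↔
    (b ∈ st.2.1 ∧ st.2.2 b = i ∧ StepSwitched st i b) ∨
      (b ∈ st.1 ∧ ¬ StepSwitched st i b) := by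
  simp only [switchStep, StepSwitched, mem_union, mem_filter]

lemma mem_switchStep_snd : b ∈ (switchStep st i).2.1 ↔
    (b ∈ st.2.1 ∧ ¬ (st.2.2 b = i ∧ StepSwitched st i b)) ∨
      (b ∈ st.1 ∧ StepSwitched st i b) := by
  simp only [switchStep, StepSwitched, mem_union, mem_filter]

lemma switchStep_snd_snd :
    (switchStep st i).2.2 b = if b ∈ st.1 ∧ StepSwitched st i b then i else st.2.2 b :=
  if_congr Iff.rfl rfl rfl

variable {s : Bool} {t : ℕ} {c : Config}

lemma IsSlideState.isSwitched_iff (h : IsSlideState s t c st) (i : ℕ) (b : Box) :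
    IsSwitched (s, t) (!s, i) c b ↔ StepSwitched st i b := by
  have hS : activeSet (s, t) (!s, i) c = ↑(st.1 ∪ st.2.1.filter (fun b => st.2.2 b = i)) := by
    ext b
    rw [mem_coe, mem_union, h.2.mem_filter_iff trivial, h.1]
    rfl
  unfold IsSwitched; rw [hS]; rfl

lemma isSlideState_switchStep (h : IsSlideState s t c st) (i : ℕ) :
    IsSlideState s t (switch (s, t) (!s, i) c) (switchStep st i) := by
  have hsw := h.isSwitched_iff i
  obtain ⟨hdots, hdom⟩ := h
  have hdisj : ∀ b ∈ st.1, b ∉ st.2.1 := fun b h₁ h₂ => by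
    have := (hdots b).1 h₁
    rw [hdom.apply h₂] at this
    simp at this
  refine ⟨fun b => ?_, fun b hb => ⟨trivial, ?_⟩, fun b v _ hb => ?_⟩
  · rw [mem_switchStep_fst, ← hsw]
    by_cases hs : IsSwitched (s, t) (!s, i) c b
    · rw [switch_apply_of_isSwitched hs]
      rcases hs.mem with h | h
      · have h₁ := (hdots b).2 h
        simp [h, hdisj b h₁, hs]
      · have h₂ := hdom.2 b i trivial h
        have hf : st.2.2 b = i := by simpa [hdom.apply h₂] using h
        simp [h, h₂, hf, hs]
    · simp [hs, switch_apply_of_not_isSwitched hs, hdots]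
  · rw [mem_switchStep_snd, ← hsw] at hb
    rw [switchStep_snd_snd, ← hsw]
    rcases hb with ⟨hb, hn⟩ | ⟨hb, hs⟩
    · have hs : ¬ IsSwitched (s, t) (!s, i) c b := by
        intro hs
        rcases hs.mem with h | h
        · exact hdisj b ((hdots b).2 h) hb
        · exact hn ⟨by simpa [hdom.apply hb] using h, hs⟩
      rw [if_neg fun h => hdisj b h.1 hb, switch_apply_of_not_isSwitched hs, hdom.apply hb]
    · rw [if_pos ⟨hb, hs⟩, switch_apply_of_isSwitched hs, if_pos ((hdots b).1 hb)]
  · rw [mem_switchStep_snd, ← hsw]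
    by_cases hs : IsSwitched (s, t) (!s, i) c b
    · rw [switch_apply_of_isSwitched hs] at hb
      rcases hs.mem with h | h
      · exact Or.inr ⟨(hdots b).2 h, hs⟩
      · simp [h] at hb
    · rw [switch_apply_of_not_isSwitched hs] at hb
      exact Or.inl ⟨hdom.2 b v trivial hb, fun h => hs h.2⟩

lemma KState_succ (xs dom : Finset Box) (f : Box → ℕ) (m : ℕ) :
    KState xs dom f (m + 1) = switchStep (KState xs dom f m) (m + 1) := by
  rw [KState, List.range_succ, List.foldl_append]
  rfl

lemma isSlideState_kState {xs dom : Finset Box} {f : Box → ℕ}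
    (h : IsSlideState s t c (xs, dom, f)) (m : ℕ) :
    IsSlideState s t (switchWord (slideWord s t m) c) (KState xs dom f m) := by
  induction m with
  | zero => exact h
  | succ m ih =>
    rw [KState_succ, slideWord_succ, switchWord_append, switchWord_cons, switchWord_nil]
    exact isSlideState_switchStep ih (m + 1)

end Slide

section Infusion

abbrev InfusionState : Type :=
  (Finset Box × (Box → ℕ)) × (Finset Box × (Box → ℕ)) × (Finset Box × (Box → ℕ))

lemma maxEntry_eq_of_exists_eq_iff {dom : Finset Box} {f : Box → ℕ} {n : ℕ}
    (h : ∀ v, (∃ b ∈ dom, f b = v) ↔ 1 ≤ v ∧ v ≤ n) : maxEntry dom f = n := by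
  apply le_antisymm
  · exact Finset.sup_le fun b hb => ((h _).1 ⟨b, hb, rfl⟩).2
  · rcases Nat.eq_zero_or_pos n with rfl | hn
    · exact Nat.zero_le _
    · obtain ⟨b, hb, hbn⟩ := (h n).2 ⟨hn, le_rfl⟩
      exact hbn ▸ Finset.le_sup (f := f) hb

/-- The configuration during a pass of K-infusion, once the inner labels above `M` have slid
out: side `s` carries the rest of the inner tableau (labels `≤ M`) and the record of the
vacated holes (labels `> M`), side `!s` carries the outer tableau. -/
structure PassInv (s : Bool) (N K M : ℕ) (c : Config) (st : InfusionState) : Prop where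
  proper : IsProper c
  labels : ∀ v, (∃ b, c b = some (s, v)) ↔ 1 ≤ v ∧ v ≤ N
  labels_not : ∀ v, (∃ b, c b = some (!s, v)) ↔ 1 ≤ v ∧ v ≤ K
  inner : IsPart c s (· ≤ M) st.1.1 st.1.2
  outer : IsPart c (!s) (fun _ => True) st.2.1.1 st.2.1.2
  record : IsPart c s (M < ·) st.2.2.1 st.2.2.2

variable {s : Bool} {N K M : ℕ} {c : Config} {st : InfusionState}

lemma PassInv.step (h : PassInv s N K (M + 1) c st) (hM : M + 1 ≤ N) :
    PassInv s N K M (switchWord (slideWord s (M + 1) K) c) (infusionStep st) := by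
  have hmax : maxEntry st.1.1 st.1.2 = M + 1 := maxEntry_eq_of_exists_eq_iff fun v => by
    rw [h.inner.exists_eq_iff, h.labels]; omega
  have hmaxK : maxEntry st.2.1.1 st.2.1.2 = K := maxEntry_eq_of_exists_eq_iff fun v => by
    rw [h.outer.exists_eq_iff, h.labels_not, true_and]
  have hks := isSlideState_kState (⟨fun b => h.inner.mem_filter_iff le_rfl, h.outer⟩ :
    IsSlideState s (M + 1) c (st.1.1.filter (fun b => st.1.2 b = M + 1), st.2.1.1, st.2.1.2)) K
  have hfix : ∀ b v, v ≠ M + 1 → _ := fun b v hv =>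
    switchWord_slideWord_apply_eq_some_iff (s := s) (m := K) hv c b
  simp only [infusionStep, hmax, hmaxK]
  refine ⟨isProper_switchWord h.proper,
    fun v => (exists_switchWord_apply_eq_iff h.proper).trans (h.labels v),
    fun v => (exists_switchWord_apply_eq_iff h.proper).trans (h.labels_not v), ?_, hks.2, ?_⟩
  · exact ((h.inner.sdiff_filter (M + 1)).of_agree fun b v hv => hfix b v hv.2).congr
      fun _ v _ => by omega
  · exact ((h.record.of_agree fun b v hv => hfix b v (by omega)).union
      hks.1).congr fun _ v _ => by omega

lemma PassInv.iterate (h : PassInv s N K M c st) (hM : M ≤ N) :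
    PassInv s N K 0 (switchWord (passWord s M K) c) (infusionStep^[M] st) := by
  induction M generalizing c st with
  | zero => exact h
  | succ M ih =>
    rw [Function.iterate_succ_apply, passWord, switchWord_append]
    exact ih (h.step hM) (by omega)

lemma PassInv.kInfusion {T U : Finset Box} {Tf Uf : Box → ℕ}
    (h : PassInv s N K N c ((T, Tf), (U, Uf), (∅, fun _ => 0))) :
    ∃ inner,
      PassInv s N K 0 (switchWord (passWord s N K) c) (inner, KInfusion T Tf U Uf) := by
  have hmax : maxEntry T Tf = N := maxEntry_eq_of_exists_eq_iff fun v => by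
    rw [h.inner.exists_eq_iff, h.labels]; omega
  refine ⟨(infusionStep^[N] ((T, Tf), (U, Uf), (∅, fun _ => 0))).1, ?_⟩
  rw [KInfusion, hmax]
  exact h.iterate le_rfl

lemma PassInv.swap {inner P Q : Finset Box × (Box → ℕ)}
    (h : PassInv s N K 0 c (inner, P, Q)) :
    PassInv (!s) K N K c ((P.1, P.2), (Q.1, Q.2), (∅, fun _ => 0)) := by
  have hlabels : ∀ v, (∃ b, c b = some (!!s, v)) ↔ 1 ≤ v ∧ v ≤ N := by
    rw [Bool.not_not]; exact h.labels
  have hinner : IsPart c (!s) (· ≤ K) P.1 P.2 := h.outer.congr fun b v hb => by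
    have := (h.labels_not v).1 ⟨b, hb⟩
    simp only [true_iff]; omega
  have houter : IsPart c (!!s) (fun _ => True) Q.1 Q.2 := by
    rw [Bool.not_not]
    exact h.record.congr fun b v hb => by
      have := (h.labels v).1 ⟨b, hb⟩
      simp only [iff_true]; omega
  refine ⟨h.proper, h.labels_not, hlabels, hinner, houter, ⟨by simp, fun b v hv hb => ?_⟩⟩
  have := (h.labels_not v).1 ⟨b, hb⟩
  simp only at hv; omega

end Infusion

section Initial

variable {A B : Finset Box} {f g : Box → ℕ}

lemma IncreasingOn.ne_of_adjB (h : IncreasingOn A f) {a b : Box} (ha : a ∈ A) (hb : b ∈ A)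
    (hab : adjB a b) : f a ≠ f b := by
  obtain ⟨ar, ac⟩ := a
  obtain ⟨br, bc⟩ := b
  rcases hab with ⟨h₁, h₂ | h₂⟩ | ⟨h₁, h₂ | h₂⟩ <;> simp only at h₁ h₂ <;> subst h₁ h₂
  · exact (h.1 _ _ ha hb).ne
  · exact (h.1 _ _ hb ha).ne'
  · exact (h.2 _ _ ha hb).ne
  · exact (h.2 _ _ hb ha).ne'

lemma IsIncTab.exists_eq_iff (h : IsIncTab A f) (v : ℕ) :
    (∃ b ∈ A, f b = v) ↔ 1 ≤ v ∧ v ≤ maxEntry A f :=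
  ⟨fun ⟨b, hb, hbv⟩ => hbv ▸ ⟨h.2.1 b hb, Finset.le_sup hb⟩, fun ⟨h₁, h₂⟩ => h.2.2 v h₁ h₂⟩

def pairConfig (A : Finset Box) (f : Box → ℕ) (B : Finset Box) (g : Box → ℕ) : Config :=
  fun b => if b ∈ A then some (true, f b) else if b ∈ B then some (false, g b) else none

lemma isPart_pairConfig_left : IsPart (pairConfig A f B g) true (fun _ => True) A f := by
  refine ⟨fun b hb => ⟨trivial, if_pos hb⟩, fun b v _ hb => ?_⟩
  by_contra hA
  simp only [pairConfig, if_neg hA] at hb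
  split_ifs at hb
  simp at hb

lemma isPart_pairConfig_right (h : Disjoint A B) :
    IsPart (pairConfig A f B g) false (fun _ => True) B g := by
  refine ⟨fun b hb => ⟨trivial, ?_⟩, fun b v _ hb => ?_⟩
  · simp [pairConfig, Finset.disjoint_right.mp h hb, hb]
  · simp only [pairConfig] at hb
    split_ifs at hb with hA hB <;> simp_all

lemma isProper_pairConfig (hf : IncreasingOn A f) (hg : IncreasingOn B g) :
    IsProper (pairConfig A f B g) := by
  intro a b l hab ha hb
  simp only [pairConfig] at ha hb
  split_ifs at ha hb with ha' hb' hb' ha' hb' hb' <;> rw [← hb] at ha <;> simp at ha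
  · exact hf.ne_of_adjB ‹_› ‹_› hab ha
  · exact hg.ne_of_adjB ‹_› ‹_› hab ha

lemma passInv_pairConfig (hf : IsIncTab A f) (hg : IsIncTab B g) (h : Disjoint A B) :
    PassInv true (maxEntry A f) (maxEntry B g) (maxEntry A f) (pairConfig A f B g)
      ((A, f), (B, g), (∅, fun _ => 0)) := by
  have hlabels :
      ∀ v, (∃ b, pairConfig A f B g b = some (true, v)) ↔ 1 ≤ v ∧ v ≤ maxEntry A f := fun v => by
    rw [← hf.exists_eq_iff, isPart_pairConfig_left.exists_eq_iff, true_and]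
  refine ⟨isProper_pairConfig hf.1 hg.1, hlabels, fun v => ?_,
    isPart_pairConfig_left.congr fun b v hb => ?_, isPart_pairConfig_right h,
    ⟨by simp, fun b v hv hb => ?_⟩⟩
  · rw [← hg.exists_eq_iff, (isPart_pairConfig_right h).exists_eq_iff, true_and]; rfl
  · have := (hlabels v).1 ⟨b, hb⟩
    simp only [true_iff]; omega
  · have := (hlabels v).1 ⟨b, hb⟩
    simp only at hv; omega

end Initial

theorem stmt5_general (alpha lam nu : Finset Box) (Tf Uf : Box → ℕ)
    (hT : IsIncTab (lam \ alpha) Tf) (hU : IsIncTab (nu \ lam) Uf) :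
    (KInfusion (KInfusion (lam \ alpha) Tf (nu \ lam) Uf).1.1
               (KInfusion (lam \ alpha) Tf (nu \ lam) Uf).1.2
               (KInfusion (lam \ alpha) Tf (nu \ lam) Uf).2.1
               (KInfusion (lam \ alpha) Tf (nu \ lam) Uf).2.2).1.1 = lam \ alpha ∧
    (∀ b ∈ lam \ alpha,
      (KInfusion (KInfusion (lam \ alpha) Tf (nu \ lam) Uf).1.1
                 (KInfusion (lam \ alpha) Tf (nu \ lam) Uf).1.2
                 (KInfusion (lam \ alpha) Tf (nu \ lam) Uf).2.1
                 (KInfusion (lam \ alpha) Tf (nu \ lam) Uf).2.2).1.2 b = Tf b) ∧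
    (KInfusion (KInfusion (lam \ alpha) Tf (nu \ lam) Uf).1.1
               (KInfusion (lam \ alpha) Tf (nu \ lam) Uf).1.2
               (KInfusion (lam \ alpha) Tf (nu \ lam) Uf).2.1
               (KInfusion (lam \ alpha) Tf (nu \ lam) Uf).2.2).2.1 = nu \ lam ∧
    (∀ b ∈ nu \ lam,
      (KInfusion (KInfusion (lam \ alpha) Tf (nu \ lam) Uf).1.1
                 (KInfusion (lam \ alpha) Tf (nu \ lam) Uf).1.2
                 (KInfusion (lam \ alpha) Tf (nu \ lam) Uf).2.1
                 (KInfusion (lam \ alpha) Tf (nu \ lam) Uf).2.2).2.2 b = Uf b) := by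
  have hdisj : Disjoint (lam \ alpha) (nu \ lam) :=
    Finset.disjoint_left.mpr fun b hT hU => (mem_sdiff.mp hU).2 (mem_sdiff.mp hT).1
  obtain ⟨_, h₁⟩ := (passInv_pairConfig hT hU hdisj).kInfusion
  obtain ⟨_, h₂⟩ := h₁.swap.kInfusion
  rw [Bool.not_true, switchWord_passWord_passWord] at h₂
  obtain ⟨hTdom, hTf⟩ := h₂.outer.unique isPart_pairConfig_left
  obtain ⟨hUdom, hUf⟩ := h₂.record.unique ((isPart_pairConfig_right hdisj).congr
    fun b v hb => by have := (h₂.labels v).1 ⟨b, hb⟩; simp only [true_iff]; omega)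
  exact ⟨hTdom, fun b hb => hTf b (by rwa [hTdom]), hUdom,
    fun b hb => hUf b (by rwa [hUdom])⟩

/-- K-infusion is an involution. -/
theorem stmt5 (alpha lam nu : Finset Box) (Tf Uf : Box → ℕ)
    (halpha : IsYoung alpha) (hlam : IsYoung lam) (hnu : IsYoung nu)
    (hal : alpha ⊆ lam) (hln : lam ⊆ nu)
    (hT : IsIncTab (lam \ alpha) Tf) (hU : IsIncTab (nu \ lam) Uf) :
    (KInfusion (KInfusion (lam \ alpha) Tf (nu \ lam) Uf).1.1
               (KInfusion (lam \ alpha) Tf (nu \ lam) Uf).1.2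
               (KInfusion (lam \ alpha) Tf (nu \ lam) Uf).2.1
               (KInfusion (lam \ alpha) Tf (nu \ lam) Uf).2.2).1.1 = lam \ alpha ∧
    (∀ b ∈ lam \ alpha,
      (KInfusion (KInfusion (lam \ alpha) Tf (nu \ lam) Uf).1.1
                 (KInfusion (lam \ alpha) Tf (nu \ lam) Uf).1.2
                 (KInfusion (lam \ alpha) Tf (nu \ lam) Uf).2.1
                 (KInfusion (lam \ alpha) Tf (nu \ lam) Uf).2.2).1.2 b = Tf b) ∧
    (KInfusion (KInfusion (lam \ alpha) Tf (nu \ lam) Uf).1.1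
               (KInfusion (lam \ alpha) Tf (nu \ lam) Uf).1.2
               (KInfusion (lam \ alpha) Tf (nu \ lam) Uf).2.1
               (KInfusion (lam \ alpha) Tf (nu \ lam) Uf).2.2).2.1 = nu \ lam ∧
    (∀ b ∈ nu \ lam,
      (KInfusion (KInfusion (lam \ alpha) Tf (nu \ lam) Uf).1.1
                 (KInfusion (lam \ alpha) Tf (nu \ lam) Uf).1.2
                 (KInfusion (lam \ alpha) Tf (nu \ lam) Uf).2.1
                 (KInfusion (lam \ alpha) Tf (nu \ lam) Uf).2.2).2.2 b = Uf b) :=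
  stmt5_general alpha lam nu Tf Uf hT hU
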